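/- Let A, B, C be three non-collinear points of the Euclidean plane. Let E be a point on the line through B and C, not lying in the closed segment from B to C, such that the segment AE bisects the exterior angle of the triangle at A, i.e. ∠EAB + ∠EAC = π. Then dist(E,B) · dist(A,C) = dist(E,C) · dist(A,B) (equivalently EB/EC = AB/AC). -/
import Mathlib


open EuclideanGeometry


lemma sin_cross {V : Type*} [NormedAddCommGroup V] [InnerProductSpace ℝ V] (u v : V) :
    Real.sin (InnerProductGeometry.angle u v) * (‖u‖ * ‖v‖) =
      Real.sin (InnerProductGeometry.angle (-u) (v - u)) * (‖u‖ * ‖v - u‖) := by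
  rw [InnerProductGeometry.sin_angle_mul_norm_mul_norm, show ‖u‖ = ‖-u‖ by simp,
    InnerProductGeometry.sin_angle_mul_norm_mul_norm]
  congr 1
  simp only [inner_sub_left, inner_sub_right, inner_neg_left, inner_neg_right,
    real_inner_comm u v]
  ring

lemma sin_law (P Q R : EuclideanSpace ℝ (Fin 2)) :
    Real.sin (∠ Q P R) * (dist P Q * dist P R) =
      Real.sin (∠ P Q R) * (dist Q P * dist Q R) := by
  have h1 : (P : EuclideanSpace ℝ (Fin 2)) -ᵥ Q = -(Q -ᵥ P) := (neg_vsub_eq_vsub_rev Q P).symm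
  have h2 : (R : EuclideanSpace ℝ (Fin 2)) -ᵥ Q = (R -ᵥ P) - (Q -ᵥ P) :=
    (vsub_sub_vsub_cancel_right R Q P).symm
  have hd1 : dist P Q = ‖Q -ᵥ P‖ := by rw [dist_comm]; exact dist_eq_norm_vsub _ _ _
  have hd2 : dist P R = ‖R -ᵥ P‖ := by rw [dist_comm]; exact dist_eq_norm_vsub _ _ _
  have hd3 : dist Q P = ‖Q -ᵥ P‖ := dist_eq_norm_vsub _ _ _
  have hd4 : dist Q R = ‖(R -ᵥ P) - (Q -ᵥ P)‖ := by
    rw [dist_comm, dist_eq_norm_vsub (EuclideanSpace ℝ (Fin 2)), h2, norm_sub_rev]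
  rw [EuclideanGeometry.angle, EuclideanGeometry.angle, h1, h2, hd1, hd2, hd3, hd4]
  exact sin_cross _ _



/-- Exterior angle bisector theorem: if `E` lies on line `BC`, outside the closed
segment `BC`, and `AE` bisects the exterior angle at `A` (i.e. `∠EAB + ∠EAC = π`),
then `EB · AC = EC · AB`. -/
theorem exterior_angle_bisector (A B C E : EuclideanSpace ℝ (Fin 2))
    (hABC : AffineIndependent ℝ ![A, B, C])
    (hline : E ∈ affineSpan ℝ ({B, C} : Set (EuclideanSpace ℝ (Fin 2))))
    (hseg : E ∉ segment ℝ B C)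
    (hbis : ∠ E A B + ∠ E A C = Real.pi) :
    dist E B * dist A C = dist E C * dist A B := by
  have hnc : ¬ Collinear ℝ ({A, B, C} : Set (EuclideanSpace ℝ (Fin 2))) :=
    affineIndependent_iff_not_collinear_set.mp hABC
  have hBC : B ≠ C := by
    rintro rfl
    exact hnc (by simpa using collinear_pair ℝ A B)
  obtain ⟨r, hr⟩ : ∃ r : ℝ, r • (C -ᵥ B) = E -ᵥ B := by
    have h : (E -ᵥ B) +ᵥ B ∈ affineSpan ℝ ({B, C} : Set (EuclideanSpace ℝ (Fin 2))) := by
      rwa [vsub_vadd]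
    exact vadd_left_mem_affineSpan_pair.mp h
  have hE : E = r • (C -ᵥ B) +ᵥ B := (eq_vadd_iff_vsub_eq _ _ _).mpr hr.symm
  have hrrange : r < 0 ∨ 1 < r := by
    by_contra h
    push_neg at h
    refine hseg ⟨1 - r, r, by linarith, h.1, by ring, ?_⟩
    rw [hE]
    simp only [vsub_eq_sub, vadd_eq_add]
    module
  have hrne : r ≠ 0 := by rcases hrrange with h|h <;> intro hh <;> rw [hh] at h <;> linarith
  have hr1 : r - 1 ≠ 0 := by rcases hrrange with h|h <;> intro hh <;> nlinarith
  have hCB : C -ᵥ B ≠ (0 : EuclideanSpace ℝ (Fin 2)) := fun hh => hBC (by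
    have := vsub_eq_zero_iff_eq.mp hh; exact this.symm)
  have hEB : E ≠ B := by
    intro hh
    rw [hh] at hr
    simp only [vsub_self] at hr
    exact hCB (by
      have := smul_eq_zero.mp hr
      rcases this with h|h
      · exact absurd h hrne
      · exact h)
  have hAE : A ≠ E := by
    intro hh
    apply hnc
    exact collinear_insert_of_mem_affineSpan_pair (hh ▸ hline)
  have hEAB : ¬ Collinear ℝ ({E, A, B} : Set (EuclideanSpace ℝ (Fin 2))) := by
    intro hcol
    have hAmem : A ∈ affineSpan ℝ ({E, B} : Set (EuclideanSpace ℝ (Fin 2))) :=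
      hcol.mem_affineSpan_of_mem_of_ne (by simp) (by simp) (by simp) hEB
    have hle : affineSpan ℝ ({E, B} : Set (EuclideanSpace ℝ (Fin 2))) ≤
        affineSpan ℝ ({B, C} : Set (EuclideanSpace ℝ (Fin 2))) :=
      affineSpan_pair_le_of_mem_of_mem hline (left_mem_affineSpan_pair ℝ B C)
    exact hnc (collinear_insert_of_mem_affineSpan_pair (hle hAmem))
  -- B -ᵥ E is a positive multiple of C -ᵥ E
  have hBE : B -ᵥ E = (-r) • (C -ᵥ B) := by
    rw [hE]; simp only [vsub_eq_sub, vadd_eq_add]; module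
  have hCE : C -ᵥ E = (1 - r) • (C -ᵥ B) := by
    rw [hE]; simp only [vsub_eq_sub, vadd_eq_add]; module
  have ht : (0 : ℝ) < r / (r - 1) := by
    rcases hrrange with h|h
    · exact div_pos_of_neg_of_neg (by linarith) (by linarith)
    · exact div_pos (by linarith) (by linarith)
  have hBEt : B -ᵥ E = (r / (r - 1)) • (C -ᵥ E) := by
    rw [hBE, hCE, smul_smul]
    congr 1
    field_simp
    ring
  have hang : ∠ A E B = ∠ A E C := by
    unfold EuclideanGeometry.angle
    rw [hBEt]
    exact InnerProductGeometry.angle_smul_right_of_pos _ _ ht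
  have hsin : Real.sin (∠ E A C) = Real.sin (∠ E A B) := by
    have h : ∠ E A C = Real.pi - ∠ E A B := by linarith
    rw [h, Real.sin_pi_sub]
  have L1 := sin_law A E B
  have L2 := sin_law A E C
  rw [hsin, ← hang] at L2
  have hs : Real.sin (∠ E A B) ≠ 0 := sin_ne_zero_of_not_collinear hEAB
  have hd : dist A E ≠ 0 := dist_ne_zero.mpr hAE
  have hd2 : dist E A = dist A E := dist_comm E A
  rw [hd2] at L1 L2
  have key : Real.sin (∠ E A B) * dist A E * (dist E B * dist A C) =
      Real.sin (∠ E A B) * dist A E * (dist E C * dist A B) := by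
    linear_combination dist E B * L2 - dist E C * L1
  exact mul_left_cancel₀ (mul_ne_zero hs hd) key
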